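/- Let d ≥ 2 and let T_d be the d-dimensional folded Baker's map on Q_d. For any k, l ∈ ℕ, j ∈ ℤ ∩ [0, 2^k), and i ∈ ℤ ∩ [0, 2^{(d-1)l}), the set T_d^l(H^j_k) ∩ H^i_{(d-1)l} is a single horizontal dyadic slab of width 2^{-(k+(d-1)l)}; that is, there exists j' ∈ ℤ ∩ [0, 2^{k+(d-1)l}) such that T_d^l(H^j_k) ∩ H^i_{(d-1)l} = H^{j'}_{k+(d-1)l}. -/

import Mathlib

open MeasureTheory Set Filter

noncomputable section

/-- The 2D folded Baker's map on `(0,1)²` (extended to all of `ℝ²` by the same formulas). -/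
def T2 : ℝ × ℝ → ℝ × ℝ := fun p =>
  if p.1 < 1/2 then (1 - 2 * p.1, (1 - p.2) / 2)
  else if p.1 = 1/2 then (p.2, 1/2)
  else (2 * p.1 - 1, (1 + p.2) / 2)

/-- The map applying `T2` to the pair of coordinates `(x i, x j)` of `x ∈ ℝ^d`, leaving all
other coordinates unchanged. -/
def Tapply (d : ℕ) (i j : Fin d) (x : EuclideanSpace ℝ (Fin d)) :
    EuclideanSpace ℝ (Fin d) := WithLp.toLp 2 fun l =>
  if l = i then (T2 (x i, x j)).1 else if l = j then (T2 (x i, x j)).2 else x l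

/-- The `d`-dimensional folded Baker's map `T_d = T_{d,d-1} ∘ ⋯ ∘ T_{d,1}`, where `T_{d,i}`
applies `T2` to the coordinates `(x_i, x_d)`. -/
def Td (d : ℕ) : EuclideanSpace ℝ (Fin d) → EuclideanSpace ℝ (Fin d) := fun x =>
  (List.finRange d).foldl
    (fun y (i : Fin d) => if hi : i.val < d - 1 then Tapply d i ⟨d - 1, by omega⟩ y else y) x

/-- The open unit cube `Q_d = (0,1)^d`. -/
def Qd (d : ℕ) : Set (EuclideanSpace ℝ (Fin d)) := {x | ∀ i, x i ∈ Ioo (0:ℝ) 1}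

/-- `Q_d` minus all points with a dyadic rational coordinate. -/
def Qd' (d : ℕ) : Set (EuclideanSpace ℝ (Fin d)) :=
  Qd d \ {x | ∃ i, ∃ k : ℕ, ∃ m : ℤ, 2 ^ k * x i = (m : ℝ)}

/-- The last coordinate `x_d` of `x ∈ ℝ^d`. -/
def lastCoord (d : ℕ) (x : EuclideanSpace ℝ (Fin d)) : ℝ :=
  if h : 0 < d then x ⟨d - 1, by omega⟩ else 0

/-- The horizontal dyadic slab `H^j_k` of width `2^{-k}`. -/
def Hslab (d : ℕ) (j k : ℕ) : Set (EuclideanSpace ℝ (Fin d)) :=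
  {x | lastCoord d x ∈ Ioo ((j : ℝ) / 2 ^ k) (((j : ℝ) + 1) / 2 ^ k)} ∩ Qd' d

/-!
Off the dyadic points every map involved is a bijection of `Q_d'`. Each fold `T_{d,i}` sends
the lower or upper half of `x_d` affinely onto `(0,1)`, so on each half-slab of the image the
last coordinate of the preimage is an affine function of slope `±2` of the last coordinate.
Composing, on every slab `H^i_N` with `N = (d-1)l` the last coordinate of the preimage under
`T_d^l` is an affine function of slope `±2^N`, which pulls `H^j_k` back to a dyadic slab of
width `2^{-(k+N)}` inside `H^i_N`.
-/

def dyadicIoo (k j : ℕ) : Set ℝ := Ioo ((j : ℝ) / 2 ^ k) (((j : ℝ) + 1) / 2 ^ k)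

/-- The affine map of slope `±2^N` taking `dyadicIoo N i` onto `(0,1)`; `b` is its orientation. -/
def rescale (N i : ℕ) (b : Bool) (y : ℝ) : ℝ :=
  if b then 2 ^ N * y - i else i + 1 - 2 ^ N * y

/-- The index of `dyadicIoo k j`, or of its mirror image under `y ↦ 1 - y` when `b = false`. -/
def orientIndex (k : ℕ) (b : Bool) (j : ℕ) : ℕ := if b then j else 2 ^ k - 1 - j

lemma orientIndex_lt {k j : ℕ} (b : Bool) (hj : j < 2 ^ k) : orientIndex k b j < 2 ^ k := by
  unfold orientIndex
  split_ifs <;> omega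

lemma orientIndex_orientIndex {k j : ℕ} (b : Bool) (hj : j < 2 ^ k) :
    orientIndex k b (orientIndex k b j) = j := by
  unfold orientIndex
  split_ifs <;> omega

lemma cast_orientIndex {k j : ℕ} (b : Bool) (hj : j < 2 ^ k) :
    (orientIndex k b j : ℝ) = if b then (j : ℝ) else 2 ^ k - 1 - j := by
  cases b
  · simp only [orientIndex, Bool.false_eq_true, if_false]
    rw [Nat.cast_sub (by omega), Nat.cast_sub Nat.one_le_two_pow]
    push_cast; ring
  · simp [orientIndex]

lemma mem_dyadicIoo {k j : ℕ} {y : ℝ} :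
    y ∈ dyadicIoo k j ↔ j < 2 ^ k * y ∧ 2 ^ k * y < j + 1 := by
  rw [dyadicIoo, mem_Ioo, div_lt_iff₀' (by positivity), lt_div_iff₀' (by positivity)]

lemma rescale_mem_dyadicIoo {N k i j : ℕ} (b : Bool) (hj : j < 2 ^ k) (y : ℝ) :
    rescale N i b y ∈ dyadicIoo k j ↔
      y ∈ dyadicIoo (k + N) (i * 2 ^ k + orientIndex k b j) := by
  rw [mem_dyadicIoo, mem_dyadicIoo]
  push_cast
  rw [cast_orientIndex b hj, pow_add]
  cases b <;> simp only [rescale, Bool.false_eq_true, if_false, if_true] <;>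
    constructor <;> rintro ⟨h₁, h₂⟩ <;> constructor <;> linarith

lemma dyadicIoo_subset {M N q r : ℕ} (hr : r < 2 ^ M) :
    dyadicIoo (M + N) (q * 2 ^ M + r) ⊆ dyadicIoo N q := by
  intro y hy
  rw [mem_dyadicIoo, pow_add] at hy
  rw [mem_dyadicIoo]
  have hr' : (r : ℝ) + 1 ≤ 2 ^ M := by exact_mod_cast hr
  have hM : (0 : ℝ) < 2 ^ M := by positivity
  push_cast at hy
  constructor
  · refine lt_of_mul_lt_mul_left ?_ hM.le
    nlinarith [(Nat.cast_nonneg r : (0 : ℝ) ≤ r)]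
  · refine lt_of_mul_lt_mul_left ?_ hM.le
    nlinarith

lemma rescale_rescale {M N q r : ℕ} (b₁ b₂ : Bool) (hr : r < 2 ^ M) (y : ℝ) :
    rescale M (orientIndex M b₁ r) b₂ (rescale N q b₁ y) =
      rescale (M + N) (q * 2 ^ M + r) (b₁ == b₂) y := by
  unfold rescale
  rw [cast_orientIndex b₁ hr]
  cases b₁ <;> cases b₂ <;> simp [pow_add] <;> ring

/-- `f` permutes `S`, and on the preimage of each slab `π ∈ dyadicIoo N i` the coordinate `π`
before applying `f` is an affine function of slope `±2^N` of the coordinate after it. -/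
def AffineOnSlabs {α : Type*} (S : Set α) (π : α → ℝ) (N : ℕ) (f : α → α) : Prop :=
  BijOn f S S ∧ ∀ i < 2 ^ N, ∃ b : Bool,
    ∀ x ∈ S, π (f x) ∈ dyadicIoo N i → π x = rescale N i b (π (f x))

lemma affineOnSlabs_id {α : Type*} (S : Set α) (π : α → ℝ) : AffineOnSlabs S π 0 id := by
  refine ⟨bijOn_id S, fun i hi => ⟨true, fun x _ _ => ?_⟩⟩
  obtain rfl : i = 0 := by omega
  simp [rescale]

namespace AffineOnSlabs

variable {α : Type*} {S : Set α} {π : α → ℝ}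

lemma comp {M N : ℕ} {f g : α → α} (hf : AffineOnSlabs S π N f)
    (hg : AffineOnSlabs S π M g) :
    AffineOnSlabs S π (M + N) (f ∘ g) := by
  refine ⟨hf.1.comp hg.1, fun i hi => ?_⟩
  obtain ⟨q, r, hr, rfl⟩ : ∃ q r, r < 2 ^ M ∧ i = q * 2 ^ M + r :=
    ⟨i / 2 ^ M, i % 2 ^ M, Nat.mod_lt _ (by positivity), (Nat.div_add_mod' i _).symm⟩
  have hq : q < 2 ^ N := by
    rw [pow_add] at hi
    by_contra! h
    nlinarith [Nat.mul_le_mul_left (2 ^ M) h]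
  obtain ⟨b₁, hb₁⟩ := hf.2 q hq
  obtain ⟨b₂, hb₂⟩ := hg.2 (orientIndex M b₁ r) (orientIndex_lt b₁ hr)
  refine ⟨b₁ == b₂, fun x hx hfgx => ?_⟩
  have hgx : π (g x) = rescale N q b₁ (π (f (g x))) :=
    hb₁ (g x) (hg.1.mapsTo hx) (dyadicIoo_subset hr hfgx)
  have hgx_mem : π (g x) ∈ dyadicIoo M (orientIndex M b₁ r) := by
    rwa [hgx, rescale_mem_dyadicIoo b₁ (orientIndex_lt b₁ hr), orientIndex_orientIndex b₁ hr]
  rw [hb₂ x hx hgx_mem, hgx, rescale_rescale b₁ b₂ hr]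
  rfl

lemma iterate {N : ℕ} {f : α → α} (hf : AffineOnSlabs S π N f) (l : ℕ) :
    AffineOnSlabs S π (N * l) f^[l] := by
  induction l with
  | zero => exact affineOnSlabs_id S π
  | succ l ih => rw [Function.iterate_succ']; exact hf.comp ih

lemma foldl {ι : Type*} {F : ι → α → α} {n : ι → ℕ} (L : List ι)
    (hF : ∀ a ∈ L, AffineOnSlabs S π (n a) (F a)) :
    AffineOnSlabs S π (L.map n).sum (fun x => L.foldl (fun y a => F a y) x) := by
  induction L with
  | nil => exact affineOnSlabs_id S π
  | cons a L ih =>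
    rw [List.map_cons, List.sum_cons]
    exact (ih fun b hb => hF b (List.mem_cons_of_mem a hb)).comp (hF a List.mem_cons_self)

lemma image_inter_eq {N k i j : ℕ} {f : α → α} (hf : AffineOnSlabs S π N f)
    (hj : j < 2 ^ k) (hi : i < 2 ^ N) :
    ∃ j' < 2 ^ (k + N), f '' (π ⁻¹' dyadicIoo k j ∩ S) ∩ (π ⁻¹' dyadicIoo N i ∩ S) =
      π ⁻¹' dyadicIoo (k + N) j' ∩ S := by
  obtain ⟨b, hb⟩ := hf.2 i hi
  have hsub : dyadicIoo (k + N) (i * 2 ^ k + orientIndex k b j) ⊆ dyadicIoo N i :=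
    dyadicIoo_subset (orientIndex_lt b hj)
  refine ⟨i * 2 ^ k + orientIndex k b j, ?_, ?_⟩
  · have := orientIndex_lt b hj
    rw [pow_add]
    nlinarith [Nat.mul_le_mul_right (2 ^ k) hi]
  ext z
  constructor
  · rintro ⟨⟨x, ⟨hxj, hx⟩, rfl⟩, hfxi, hfx⟩
    refine ⟨?_, hfx⟩
    rw [mem_preimage, ← rescale_mem_dyadicIoo b hj, ← hb x hx hfxi]
    exact hxj
  · rintro ⟨hzj', hz⟩
    obtain ⟨x, hx, rfl⟩ := hf.1.surjOn hz
    refine ⟨⟨x, ⟨?_, hx⟩, rfl⟩, hsub hzj', hz⟩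
    rw [mem_preimage, hb x hx (hsub hzj'), rescale_mem_dyadicIoo b hj]
    exact hzj'

end AffineOnSlabs

def NotDyadic (a : ℝ) : Prop := ∀ (k : ℕ) (m : ℤ), 2 ^ k * a ≠ m

lemma NotDyadic.ne_half {a : ℝ} (ha : NotDyadic a) : a ≠ 1 / 2 := by
  rintro rfl
  exact ha 1 1 (by norm_num)

lemma NotDyadic.of_two_pow_mul_eq {a b : ℝ} (ha : NotDyadic a) (p q : ℕ) (n : ℤ)
    (h : 2 ^ p * b = n + 2 ^ q * a ∨ 2 ^ p * b = n - 2 ^ q * a) : NotDyadic b := by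
  intro k m hm
  have key : 2 ^ p * (m : ℝ) = 2 ^ k * n + 2 ^ (k + q) * a ∨
      2 ^ p * (m : ℝ) = 2 ^ k * n - 2 ^ (k + q) * a := by
    rw [← hm, pow_add]
    rcases h with h | h
    · left; linear_combination (2 : ℝ) ^ k * h
    · right; linear_combination (2 : ℝ) ^ k * h
  rcases key with key | key
  · exact ha (k + q) (2 ^ p * m - 2 ^ k * n) (by push_cast; linarith)
  · exact ha (k + q) (2 ^ k * n - 2 ^ p * m) (by push_cast; linarith)

def nonDyadicIoo : Set ℝ := Ioo 0 1 ∩ {a | NotDyadic a}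

lemma mem_Qd'_iff {d : ℕ} {x : EuclideanSpace ℝ (Fin d)} :
    x ∈ Qd' d ↔ ∀ l, x l ∈ nonDyadicIoo := by
  simp only [Qd', Qd, nonDyadicIoo, NotDyadic, Set.mem_sdiff, mem_ofPred_eq, mem_inter_iff,
    not_exists, ne_eq, forall_and]

lemma mem_prod_of_mem_Qd' {d : ℕ} {x : EuclideanSpace ℝ (Fin d)} (hx : x ∈ Qd' d)
    (i e : Fin d) :
    (x i, x e) ∈ nonDyadicIoo ×ˢ nonDyadicIoo :=
  ⟨mem_Qd'_iff.mp hx i, mem_Qd'_iff.mp hx e⟩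

def T2inv : ℝ × ℝ → ℝ × ℝ := fun p =>
  if p.2 < 1 / 2 then ((1 - p.1) / 2, 1 - 2 * p.2) else ((1 + p.1) / 2, 2 * p.2 - 1)

lemma T2_of_lt {a b : ℝ} (h : a < 1 / 2) : T2 (a, b) = (1 - 2 * a, (1 - b) / 2) :=
  if_pos h

lemma T2_of_gt {a b : ℝ} (h : 1 / 2 < a) : T2 (a, b) = (2 * a - 1, (1 + b) / 2) := by
  rw [T2, if_neg (not_lt.mpr h.le), if_neg h.ne']

lemma mapsTo_T2 : MapsTo T2 (nonDyadicIoo ×ˢ nonDyadicIoo) (nonDyadicIoo ×ˢ nonDyadicIoo) := by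
  rintro ⟨a, b⟩ ⟨⟨⟨ha₀, ha₁⟩, ha⟩, ⟨⟨hb₀, hb₁⟩, hb⟩⟩
  rcases (NotDyadic.ne_half ha).lt_or_gt with h | h
  · rw [T2_of_lt h]
    refine ⟨⟨⟨by linarith, by linarith⟩, ha.of_two_pow_mul_eq 0 1 1 (.inr ?_)⟩,
      ⟨⟨by linarith, by linarith⟩, hb.of_two_pow_mul_eq 1 0 1 (.inr ?_)⟩⟩ <;>
      push_cast <;> ring
  · rw [T2_of_gt h]
    refine ⟨⟨⟨by linarith, by linarith⟩, ha.of_two_pow_mul_eq 0 1 (-1) (.inl ?_)⟩,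
      ⟨⟨by linarith, by linarith⟩, hb.of_two_pow_mul_eq 1 0 1 (.inl ?_)⟩⟩ <;>
      push_cast <;> ring

lemma mapsTo_T2inv :
    MapsTo T2inv (nonDyadicIoo ×ˢ nonDyadicIoo) (nonDyadicIoo ×ˢ nonDyadicIoo) := by
  rintro ⟨a, b⟩ ⟨⟨⟨ha₀, ha₁⟩, ha⟩, ⟨⟨hb₀, hb₁⟩, hb⟩⟩
  rcases (NotDyadic.ne_half hb).lt_or_gt with h | h
  · simp only [T2inv, if_pos h]
    refine ⟨⟨⟨by linarith, by linarith⟩, ha.of_two_pow_mul_eq 1 0 1 (.inr ?_)⟩,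
      ⟨⟨by linarith, by linarith⟩, hb.of_two_pow_mul_eq 0 1 1 (.inr ?_)⟩⟩ <;>
      push_cast <;> ring
  · simp only [T2inv, if_neg (not_lt.mpr h.le)]
    refine ⟨⟨⟨by linarith, by linarith⟩, ha.of_two_pow_mul_eq 1 0 1 (.inl ?_)⟩,
      ⟨⟨by linarith, by linarith⟩, hb.of_two_pow_mul_eq 0 1 (-1) (.inl ?_)⟩⟩ <;>
      push_cast <;> ring

lemma invOn_T2inv_T2 :
    InvOn T2inv T2 (nonDyadicIoo ×ˢ nonDyadicIoo) (nonDyadicIoo ×ˢ nonDyadicIoo) := by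
  constructor
  · rintro ⟨a, b⟩ ⟨⟨⟨ha₀, -⟩, ha⟩, ⟨⟨hb₀, hb₁⟩, -⟩⟩
    rcases (NotDyadic.ne_half ha).lt_or_gt with h | h
    · rw [T2_of_lt h, T2inv, if_pos (by linarith)]
      ext <;> simp only <;> ring
    · rw [T2_of_gt h, T2inv, if_neg (by linarith)]
      ext <;> simp only <;> ring
  · rintro ⟨a, b⟩ ⟨⟨⟨ha₀, ha₁⟩, -⟩, ⟨-, hb⟩⟩
    rcases (NotDyadic.ne_half hb).lt_or_gt with h | h
    · rw [T2inv, if_pos h, T2_of_lt (by linarith)]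
      ext <;> simp only <;> ring
    · rw [T2inv, if_neg (not_lt.mpr h.le), T2_of_gt (by linarith)]
      ext <;> simp only <;> ring

lemma affineOnSlabs_T2 : AffineOnSlabs (nonDyadicIoo ×ˢ nonDyadicIoo) Prod.snd 1 T2 := by
  refine ⟨invOn_T2inv_T2.bijOn mapsTo_T2 mapsTo_T2inv, fun q hq => ?_⟩
  refine ⟨q == 1, fun p hp hq' => ?_⟩
  rw [← congrArg Prod.snd (invOn_T2inv_T2.1 hp)]
  obtain ⟨hlo, hhi⟩ := mem_dyadicIoo.mp hq'
  interval_cases q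
  · norm_num at hlo hhi
    rw [T2inv, if_pos (by linarith)]
    simp only [rescale]
    norm_num
  · norm_num at hlo hhi
    rw [T2inv, if_neg (by linarith)]
    simp only [rescale]
    norm_num

section Tapply

variable {d : ℕ} {i e : Fin d}

lemma Tapply_apply_left (x : EuclideanSpace ℝ (Fin d)) :
    Tapply d i e x i = (T2 (x i, x e)).1 := by
  simp [Tapply]

lemma Tapply_apply_right (hie : i ≠ e) (x : EuclideanSpace ℝ (Fin d)) :
    Tapply d i e x e = (T2 (x i, x e)).2 := by
  simp [Tapply, hie.symm]

lemma Tapply_apply_of_ne {l : Fin d} (hi : l ≠ i) (he : l ≠ e)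
    (x : EuclideanSpace ℝ (Fin d)) :
    Tapply d i e x l = x l := by
  simp [Tapply, hi, he]

lemma mapsTo_Tapply (hie : i ≠ e) : MapsTo (Tapply d i e) (Qd' d) (Qd' d) := by
  intro x hx
  have hpair := affineOnSlabs_T2.1.mapsTo (mem_prod_of_mem_Qd' hx i e)
  refine mem_Qd'_iff.mpr fun l => ?_
  by_cases hli : l = i
  · subst hli; rw [Tapply_apply_left]; exact hpair.1
  by_cases hle : l = e
  · subst hle; rw [Tapply_apply_right hie]; exact hpair.2
  rw [Tapply_apply_of_ne hli hle]; exact mem_Qd'_iff.mp hx l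

lemma injOn_Tapply (hie : i ≠ e) : InjOn (Tapply d i e) (Qd' d) := by
  intro x hx y hy hxy
  have hpair : (x i, x e) = (y i, y e) :=
    affineOnSlabs_T2.1.injOn (mem_prod_of_mem_Qd' hx i e) (mem_prod_of_mem_Qd' hy i e) <| by
      ext
      · rw [← Tapply_apply_left, ← Tapply_apply_left, hxy]
      · rw [← Tapply_apply_right hie, ← Tapply_apply_right hie, hxy]
  ext l
  by_cases hli : l = i
  · subst hli; exact congrArg Prod.fst hpair
  by_cases hle : l = e
  · subst hle; exact congrArg Prod.snd hpair
  rw [← Tapply_apply_of_ne hli hle, hxy, Tapply_apply_of_ne hli hle]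

lemma surjOn_Tapply (hie : i ≠ e) : SurjOn (Tapply d i e) (Qd' d) (Qd' d) := by
  intro z hz
  obtain ⟨p, hp, hpz⟩ := affineOnSlabs_T2.1.surjOn (mem_prod_of_mem_Qd' hz i e)
  let x : EuclideanSpace ℝ (Fin d) :=
    WithLp.toLp 2 fun l => if l = i then p.1 else if l = e then p.2 else z l
  have hxi : x i = p.1 := by simp [x]
  have hxe : x e = p.2 := by simp [x, hie.symm]
  have hxl : ∀ l, l ≠ i → l ≠ e → x l = z l := fun l hli hle => by simp [x, hli, hle]
  refine ⟨x, mem_Qd'_iff.mpr fun l => ?_, ?_⟩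
  · by_cases hli : l = i
    · subst hli; rw [hxi]; exact hp.1
    by_cases hle : l = e
    · subst hle; rw [hxe]; exact hp.2
    rw [hxl l hli hle]; exact mem_Qd'_iff.mp hz l
  · have hT : T2 (x i, x e) = (z i, z e) := by rw [hxi, hxe, hpz]
    ext l
    by_cases hli : l = i
    · subst hli; rw [Tapply_apply_left, hT]
    by_cases hle : l = e
    · subst hle; rw [Tapply_apply_right hie, hT]
    rw [Tapply_apply_of_ne hli hle, hxl l hli hle]

lemma affineOnSlabs_Tapply (hie : i ≠ e) :
    AffineOnSlabs (Qd' d) (fun x => x e) 1 (Tapply d i e) := by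
  refine ⟨⟨mapsTo_Tapply hie, injOn_Tapply hie, surjOn_Tapply hie⟩, fun q hq => ?_⟩
  obtain ⟨b, hb⟩ := affineOnSlabs_T2.2 q hq
  refine ⟨b, fun x hx hTx => ?_⟩
  dsimp only at hTx ⊢
  rw [Tapply_apply_right hie] at hTx ⊢
  exact hb _ (mem_prod_of_mem_Qd' hx i e) hTx

end Tapply

lemma lastCoord_eq {d : ℕ} (hd : 0 < d) : lastCoord d = fun x => x ⟨d - 1, by omega⟩ := by
  funext x
  rw [lastCoord, dif_pos hd]

lemma affineOnSlabs_Td {d : ℕ} (hd : 2 ≤ d) :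
    AffineOnSlabs (Qd' d) (lastCoord d) (d - 1) (Td d) := by
  have hsteps : ∀ i ∈ List.finRange d, AffineOnSlabs (Qd' d) (lastCoord d)
      (if i.val < d - 1 then 1 else 0)
      (fun y => if hi : i.val < d - 1 then Tapply d i ⟨d - 1, by omega⟩ y else y) := by
    intro i _
    by_cases hi : i.val < d - 1
    · simp only [hi, dif_pos, if_true]
      rw [lastCoord_eq (by omega)]
      exact affineOnSlabs_Tapply (Fin.ne_of_val_ne (by simp; omega))
    · simp only [hi, if_false]
      exact affineOnSlabs_id _ _
  have hdepth : ((List.finRange d).map fun i : Fin d => if i.val < d - 1 then 1 else 0).sum =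
      d - 1 := by
    simp [← List.ofFn_eq_map, List.sum_ofFn, Finset.sum_boole, Fin.card_filter_val_lt]
  have h := AffineOnSlabs.foldl _ hsteps
  rw [hdepth] at h
  exact h

theorem image_of_horizontal_slab (d : ℕ) (hd : 2 ≤ d) (k l : ℕ) (j i : ℕ)
    (hj : j < 2 ^ k) (hi : i < 2 ^ ((d - 1) * l)) :
    ∃ j' : ℕ, j' < 2 ^ (k + (d - 1) * l) ∧
      (Td d)^[l] '' Hslab d j k ∩ Hslab d i ((d - 1) * l) = Hslab d j' (k + (d - 1) * l) :=
  ((affineOnSlabs_Td hd).iterate l).image_inter_eq hj hi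

end
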